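/- arXiv:1506.03843 — 2 statements merged into one kernel-verified Lean document; each statement's English description precedes it below -/
import Mathlib

section
/- Let A be a finite semilattice forest automaton satisfying a·x ≤ x for all a ∈ Σ and x ∈ Q, with least element q₀, and let p be an atom of Q (i.e., p ≠ q₀ and there is no y with q₀ < y < p). Then the equivalence relation Θ_p merging {q₀, p} into one class and leaving all other states singleton is a congruence of A. -/
/-- Merging the least element `q₀` with an atom `p` yields a
congruence of a finite semilattice forest automaton satisfying `a·x ≤ x`. -/
theorem stmt7 {σ Q : Type*} [AddCommMonoid Q] [Fintype Q]
    (act : σ → Q → Q)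
    (idem : ∀ x : Q, x + x = x)
    (le : Q → Q → Prop) (hle : ∀ x y, le x y ↔ x = x + y)
    (h_dec : ∀ (a : σ) (x : Q), le (act a x) x)
    (q₀ : Q) (hq₀ : q₀ = ∑ q : Q, q)
    (p : Q) (hp_ne : p ≠ q₀)
    (hp_atom : ∀ y : Q, q₀ ≠ y → le q₀ y → le y p → y = p)
    (Θp : Q → Q → Prop)
    (hΘp : ∀ x y, Θp x y ↔ (x = y ∨ (x ∈ ({q₀, p} : Set Q) ∧ y ∈ ({q₀, p} : Set Q)))) :
    Equivalence Θp ∧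
    (∀ x₁ x₂ y₁ y₂, Θp x₁ x₂ → Θp y₁ y₂ → Θp (x₁ + y₁) (x₂ + y₂)) ∧
    (∀ (a : σ) (x₁ x₂ : Q), Θp x₁ x₂ → Θp (act a x₁) (act a x₂)) := by
  classical
  -- q₀ absorbs everything: q₀ + y = q₀
  have hleast : ∀ y : Q, q₀ + y = q₀ := by
    intro y
    have h1 : y + ∑ q ∈ Finset.univ.erase y, q = ∑ q : Q, q :=
      Finset.add_sum_erase Finset.univ (fun q => q) (Finset.mem_univ y)
    calc q₀ + y = (y + ∑ q ∈ Finset.univ.erase y, q) + y := by rw [hq₀, h1]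
      _ = (y + y) + ∑ q ∈ Finset.univ.erase y, q := by
          rw [add_comm (y + ∑ q ∈ Finset.univ.erase y, q) y, ← add_assoc]
      _ = y + ∑ q ∈ Finset.univ.erase y, q := by rw [idem]
      _ = q₀ := by rw [h1, hq₀]
  -- helpers
  have hmem : ∀ x : Q, x ∈ ({q₀, p} : Set Q) ↔ (x = q₀ ∨ x = p) := by
    intro x; simp [Set.mem_insert_iff]
  have hpy : ∀ y : Q, p + y ∈ ({q₀, p} : Set Q) := by
    intro y
    rw [hmem]
    by_cases h : q₀ = p + y
    · exact Or.inl h.symm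
    · refine Or.inr (hp_atom _ h ?_ ?_)
      · rw [hle]; exact (hleast (p + y)).symm
      · rw [hle]
        have h2 : p + y + p = p + y := by
          rw [add_assoc, add_comm y p, ← add_assoc, idem]
        exact h2.symm
  have hactq : ∀ a : σ, act a q₀ = q₀ := by
    intro a
    have h1 : act a q₀ = act a q₀ + q₀ := (hle _ _).mp (h_dec a q₀)
    rw [h1, add_comm, hleast]
  have hactp : ∀ a : σ, act a p ∈ ({q₀, p} : Set Q) := by
    intro a
    rw [hmem]
    by_cases h : q₀ = act a p
    · exact Or.inl h.symm
    · refine Or.inr (hp_atom _ h ?_ (h_dec a p))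
      rw [hle]; exact (hleast (act a p)).symm
  have hqmem : q₀ ∈ ({q₀, p} : Set Q) := by rw [hmem]; exact Or.inl rfl
  -- equivalence
  have hequiv : Equivalence Θp := by
    constructor
    · intro x; rw [hΘp]; exact Or.inl rfl
    · intro x y h; rw [hΘp] at *
      rcases h with h | ⟨h1, h2⟩
      · exact Or.inl h.symm
      · exact Or.inr ⟨h2, h1⟩
    · intro x y z hxy hyz; rw [hΘp] at *
      rcases hxy with rfl | ⟨h1, h2⟩
      · exact hyz
      · rcases hyz with rfl | ⟨h3, h4⟩
        · exact Or.inr ⟨h1, h2⟩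
        · exact Or.inr ⟨h1, h4⟩
  -- one-sided add compatibility
  have hadd1 : ∀ x₁ x₂ y : Q, Θp x₁ x₂ → Θp (x₁ + y) (x₂ + y) := by
    intro x₁ x₂ y h
    rw [hΘp] at *
    rcases h with rfl | ⟨h1, h2⟩
    · exact Or.inl rfl
    · refine Or.inr ⟨?_, ?_⟩
      · rcases (hmem _).mp h1 with h | h
        · rw [h, hleast]; exact hqmem
        · rw [h]; exact hpy y
      · rcases (hmem _).mp h2 with h | h
        · rw [h, hleast]; exact hqmem
        · rw [h]; exact hpy y
  refine ⟨hequiv, ?_, ?_⟩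
  · intro x₁ x₂ y₁ y₂ hx hy
    have h1 := hadd1 x₁ x₂ y₁ hx
    have h2 := hadd1 y₁ y₂ x₂ hy
    rw [add_comm y₁ x₂, add_comm y₂ x₂] at h2
    exact hequiv.trans h1 h2
  · intro a x₁ x₂ h
    rw [hΘp] at *
    rcases h with rfl | ⟨h1, h2⟩
    · exact Or.inl rfl
    · refine Or.inr ⟨?_, ?_⟩
      · rcases (hmem _).mp h1 with rfl | rfl
        · rw [hactq]; exact hqmem
        · exact hactp a
      · rcases (hmem _).mp h2 with rfl | rfl
        · rw [hactq]; exact hqmem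
        · exact hactp a
end

section
/- Let A = (Q,Σ,+,0,·) be a finite semilattice forest automaton satisfying the core condition 'p ≤ q ≤ a·p implies a·p = a·q' for all states p,q and letters a, and let Θ be a congruence of A. Given p Θ p' and q Θ q' with p/Θ ≤ q/Θ ≤ (a·p)/Θ, define sequences q₀ = q, p₀ = p+q, qₙ = qₙ₋₁ + a·pₙ₋₁, pₙ = pₙ₋₁ + qₙ. Then for all n: pₙ Θ p, qₙ Θ q, pₙ ≤ qₙ, pₙ₊₁ ≤ pₙ, qₙ₊₁ ≤ qₙ, and qₙ₊₁ ≤ a·pₙ; moreover by finiteness there exists m with pₘ = pₘ₊₁ and qₘ = qₘ₊₁, and then pₘ ≤ qₘ ≤ a·pₘ, hence a·(q/Θ) = a·(p/Θ). -/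
/-- The sequences `p₀ = p+q, q₀ = q`, `qₙ = qₙ₋₁ + a·pₙ₋₁`, `pₙ = pₙ₋₁ + qₙ`
(returned as pairs `(pₙ, qₙ)`), where `f` is the action of the letter `a`. -/
def ladderSeq {Q : Type*} [AddCommMonoid Q] (f : Q → Q) (p q : Q) : ℕ → Q × Q
  | 0 => (p + q, q)
  | n + 1 =>
      let pq := ladderSeq f p q n
      let q' := pq.2 + f pq.1
      (pq.1 + q', q')

/-- Transfer of the core condition `p ≤ q ≤ a·p → a·p = a·q`
to the quotient of a finite semilattice forest automaton by a congruence,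
via the ladder sequences. (`x ≤ y` means `x = x + y`.) -/
theorem stmt16 {σ Q : Type*} [AddCommMonoid Q] [Fintype Q]
    (act : σ → Q → Q)
    (idem : ∀ x : Q, x + x = x)
    (le : Q → Q → Prop) (hle : ∀ x y, le x y ↔ x = x + y)
    (h_imp : ∀ (p q : Q) (a : σ), le p q → le q (act a p) → act a p = act a q)
    (Θ : Q → Q → Prop) (hΘ_equiv : Equivalence Θ)
    (hΘ_add : ∀ p₁ p₂ q₁ q₂, Θ p₁ p₂ → Θ q₁ q₂ → Θ (p₁ + q₁) (p₂ + q₂))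
    (hΘ_act : ∀ (a : σ) (p₁ p₂ : Q), Θ p₁ p₂ → Θ (act a p₁) (act a p₂))
    (a : σ) (p p' q q' : Q) (hpp' : Θ p p') (hqq' : Θ q q')
    (h₁ : Θ p (p + q)) (h₂ : Θ q (q + act a p)) :
    (∀ n : ℕ,
      Θ (ladderSeq (act a) p q n).1 p ∧
      Θ (ladderSeq (act a) p q n).2 q ∧
      le (ladderSeq (act a) p q n).1 (ladderSeq (act a) p q n).2 ∧
      le (ladderSeq (act a) p q (n + 1)).1 (ladderSeq (act a) p q n).1 ∧
      le (ladderSeq (act a) p q (n + 1)).2 (ladderSeq (act a) p q n).2 ∧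
      le (ladderSeq (act a) p q (n + 1)).2 (act a (ladderSeq (act a) p q n).1)) ∧
    (∃ m : ℕ,
      (ladderSeq (act a) p q m).1 = (ladderSeq (act a) p q (m + 1)).1 ∧
      (ladderSeq (act a) p q m).2 = (ladderSeq (act a) p q (m + 1)).2 ∧
      le (ladderSeq (act a) p q m).1 (ladderSeq (act a) p q m).2 ∧
      le (ladderSeq (act a) p q m).2 (act a (ladderSeq (act a) p q m).1)) ∧
    Θ (act a q) (act a p) := by
  set P := ladderSeq (act a) p q with hP
  have hsucc1 : ∀ n, (P (n + 1)).1 = (P n).1 + ((P n).2 + act a (P n).1) := fun n => rfl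
  have hsucc2 : ∀ n, (P (n + 1)).2 = (P n).2 + act a (P n).1 := fun n => rfl
  have le_add_right : ∀ x y : Q, le (x + y) y :=
    fun x y => (hle _ _).2 (by rw [add_assoc, idem])
  have le_add_left : ∀ x y : Q, le (x + y) x :=
    fun x y => (hle _ _).2 (by rw [add_assoc, add_comm y x, ← add_assoc, idem])
  have le_refl : ∀ x : Q, le x x := fun x => (hle _ _).2 (idem x).symm
  have le_trans : ∀ x y z : Q, le x y → le y z → le x z := by
    intro x y z hxy hyz
    rw [hle] at *
    rw [hxy, add_assoc, ← hyz]
  have le_antisymm : ∀ x y : Q, le x y → le y x → x = y := by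
    intro x y hxy hyx
    rw [hle] at *
    rw [hxy, add_comm, ← hyx]
  -- congruence facts
  have hΘp : ∀ n, Θ (P n).1 p ∧ Θ (P n).2 q := by
    intro n
    induction n with
    | zero => exact ⟨hΘ_equiv.symm h₁, hΘ_equiv.refl q⟩
    | succ n ih =>
      have hq' : Θ (P (n + 1)).2 q := by
        rw [hsucc2]
        exact hΘ_equiv.trans (hΘ_add _ _ _ _ ih.2 (hΘ_act a _ _ ih.1)) (hΘ_equiv.symm h₂)
      refine ⟨?_, hq'⟩
      rw [hsucc1]
      have : Θ ((P n).1 + ((P n).2 + act a (P n).1)) (p + q) :=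
        hΘ_add _ _ _ _ ih.1 (hΘ_equiv.trans (hΘ_add _ _ _ _ ih.2 (hΘ_act a _ _ ih.1))
          (hΘ_equiv.symm h₂))
      exact hΘ_equiv.trans this (hΘ_equiv.symm h₁)
  have hpq : ∀ n, le (P n).1 (P n).2 := by
    intro n
    cases n with
    | zero => exact le_add_right p q
    | succ n => rw [hsucc1, hsucc2]; exact le_add_right _ _
  have hpdec : ∀ n, le (P (n + 1)).1 (P n).1 := fun n => by
    rw [hsucc1]; exact le_add_left _ _
  have hqdec : ∀ n, le (P (n + 1)).2 (P n).2 := fun n => by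
    rw [hsucc2]; exact le_add_left _ _
  have hqact : ∀ n, le (P (n + 1)).2 (act a (P n).1) := fun n => by
    rw [hsucc2]; exact le_add_right _ _
  have chain : ∀ i j : ℕ, i ≤ j → le (P j).1 (P i).1 ∧ le (P j).2 (P i).2 := by
    intro i j hij
    induction j, hij using Nat.le_induction with
    | base => exact ⟨le_refl _, le_refl _⟩
    | succ j hij ih =>
      exact ⟨le_trans _ _ _ (hpdec j) ih.1, le_trans _ _ _ (hqdec j) ih.2⟩
  -- pigeonhole
  obtain ⟨i, j, hne, heq⟩ := Finite.exists_ne_map_eq_of_infinite (fun n : ℕ => P n)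
  wlog hij : i < j generalizing i j
  · exact this j i hne.symm heq.symm (hne.lt_or_gt.resolve_left hij)
  have hij1 : i + 1 ≤ j := hij
  have hPeq1 : (P i).1 = (P (i + 1)).1 := by
    refine le_antisymm _ _ ?_ (hpdec i)
    have := (chain (i + 1) j hij1).1
    rw [show P j = P i from heq.symm] at this
    exact this
  have hPeq2 : (P i).2 = (P (i + 1)).2 := by
    refine le_antisymm _ _ ?_ (hqdec i)
    have := (chain (i + 1) j hij1).2
    rw [show P j = P i from heq.symm] at this
    exact this
  have hm : le (P i).2 (act a (P i).1) := by
    rw [hPeq2]; exact hqact i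
  have hfinal : Θ (act a q) (act a p) := by
    have hfeq : act a (P i).1 = act a (P i).2 := h_imp _ _ a (hpq i) hm
    have h1 : Θ (act a q) (act a (P i).2) := hΘ_equiv.symm (hΘ_act a _ _ (hΘp i).2)
    have h2 : Θ (act a (P i).1) (act a p) := hΘ_act a _ _ (hΘp i).1
    exact hΘ_equiv.trans h1 (hfeq ▸ h2)
  exact ⟨fun n => ⟨(hΘp n).1, (hΘp n).2, hpq n, hpdec n, hqdec n, hqact n⟩,
    ⟨i, hPeq1, hPeq2, hpq i, hm⟩, hfinal⟩
end
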